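/- arXiv:2209.03975 — 4 statements merged into one kernel-verified Lean document; each statement's English description precedes it below -/
import Mathlib

section
/- Let n ≥ 1 and let {O_a} be an orthonormal basis of the space of n×n complex matrices with respect to the (unnormalized) trace inner product ⟨X,Y⟩ = Tr(Xᴴ Y). Then Σ_a O_aᴴ ⊗ O_a = S, where ⊗ denotes the Kronecker product and S is the n²×n² swap matrix, with entries S_{(i,j),(k,l)} = 1 if i = l and j = k, and 0 otherwise (so S(v ⊗ w) = w ⊗ v). -/
open Matrix
open scoped Kronecker

/-- The swap matrix `S` on `ℂⁿ ⊗ ℂⁿ`, with `S_{(i,j),(k,l)} = δ_{il} δ_{jk}`. -/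
def swapMat (n : ℕ) : Matrix (Fin n × Fin n) (Fin n × Fin n) ℂ :=
  Matrix.of fun p q => if p.1 = q.2 ∧ p.2 = q.1 then 1 else 0

/-!
An orthonormal basis is complete: `X = Σ_a ⟨O_a, X⟩ O_a` for every matrix `X`, since both sides
are linear in `X` and agree on the spanning family `O`. Taking `X` to be the matrix unit `E_{ji}`,
whose coefficients are `⟨O_a, E_{ji}⟩ = conj (O_a)_{ji}`, and reading off the `(k, l)` entry gives
`Σ_a conj (O_a)_{ji} (O_a)_{kl} = δ_{jk} δ_{il}`, which is the `((i,k),(j,l))` entry of both sides.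
-/

theorem sum_smul_eq_self_of_biorthogonal {ι R M : Type*} [Fintype ι] [DecidableEq ι]
    [CommSemiring R] [AddCommMonoid M] [Module R M]
    (v : ι → M) (f : ι → M →ₗ[R] R) (hf : ∀ a b, f a (v b) = if a = b then 1 else 0)
    (hv : Submodule.span R (Set.range v) = ⊤) (x : M) :
    ∑ a, f a x • v a = x := by
  have hid : ∑ a, (f a).smulRight (v a) = LinearMap.id := by
    refine LinearMap.ext_on hv ?_
    rintro _ ⟨b, rfl⟩
    simp [hf]
  simpa using LinearMap.congr_fun hid x

namespace Matrix

variable {ι m R : Type*} [Fintype ι] [DecidableEq ι] [Fintype m] [DecidableEq m]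
  [CommSemiring R] [StarRing R]

theorem sum_trace_conjTranspose_mul_smul_eq (O : ι → Matrix m m R)
    (horth : ∀ a b, ((O a)ᴴ * O b).trace = if a = b then 1 else 0)
    (hspan : Submodule.span R (Set.range O) = ⊤) (X : Matrix m m R) :
    ∑ a, ((O a)ᴴ * X).trace • O a = X :=
  sum_smul_eq_self_of_biorthogonal O
    (fun a => (traceLinearMap m R R).comp (LinearMap.mulLeft R (O a)ᴴ)) horth hspan X

theorem sum_star_apply_mul_apply_eq (O : ι → Matrix m m R)
    (horth : ∀ a b, ((O a)ᴴ * O b).trace = if a = b then 1 else 0)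
    (hspan : Submodule.span R (Set.range O) = ⊤) (i j k l : m) :
    ∑ a, star (O a j i) * O a k l = if j = k ∧ i = l then 1 else 0 := by
  have h := congr_fun₂ (sum_trace_conjTranspose_mul_smul_eq O horth hspan (single j i 1)) k l
  simpa [trace_mul_single, sum_apply, single_apply] using h

end Matrix

/-- For any orthonormal basis `{O_a}` of `Matrix n n ℂ` with respect to the unnormalized
trace inner product `⟨X,Y⟩ = Tr(Xᴴ Y)`, one has `Σ_a O_aᴴ ⊗ O_a = SWAP`. -/
theorem sum_conjTranspose_kron_self_eq_swap {n : ℕ}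
    {ι : Type*} [Fintype ι] [DecidableEq ι]
    (O : ι → Matrix (Fin n) (Fin n) ℂ)
    (hOorth : ∀ a a', ((O a)ᴴ * O a').trace = if a = a' then 1 else 0)
    (hOspan : Submodule.span ℂ (Set.range O) = ⊤) :
    ∑ a : ι, (O a)ᴴ ⊗ₖ (O a) = swapMat n := by
  ext ⟨i, k⟩ ⟨j, l⟩
  simpa [Matrix.sum_apply, swapMat, eq_comm, and_comm] using
    sum_star_apply_mul_apply_eq O hOorth hOspan i j k l
end

section
/- Let Λ be a finite set of sites, d ≥ 1, and ι := (Λ → Fin d). For A ⊆ Λ, let S_A be the permutation matrix on ι × ι induced by the bijection σ_A(x,y) := (x', y') where x'(r) = y(r) and y'(r) = x(r) for r ∈ A, and x'(r) = x(r), y'(r) = y(r) for r ∉ A (S_A swaps the A-coordinates between the two copies). Then for every matrix U ∈ Matrix ι ι ℂ and all subsets A, B ⊆ Λ: Tr((Uᴴ ⊗ Uᴴ) · S_A · (U ⊗ U) · S_B) = Tr((Uᴴ ⊗ Uᴴ) · S_{Λ∖A} · (U ⊗ U) · S_{Λ∖B}), where ⊗ denotes the Kronecker product (matrices indexed by ι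 × ι). -/
/-! Swapping the sites of `Aᶜ` is swapping those of `A` followed (or preceded) by the full swap,
so `S_{Aᶜ} = S_A S_Λ = S_Λ S_A`. Conjugation by the full swap `S_Λ` fixes `U ⊗ U`, hence the
two products agree already as matrices, not just under the trace. -/

open Matrix
open scoped Kronecker

/-- The bijection of two copies of the many-body configuration space `ι = Λ → Fin d`
that swaps the coordinates belonging to `A` between the two copies. -/
def swapFun {Λ : Type*} [DecidableEq Λ] {d : ℕ} (A : Finset Λ)
    (q : (Λ → Fin d) × (Λ → Fin d)) : (Λ → Fin d) × (Λ → Fin d) :=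
  (fun r => if r ∈ A then q.2 r else q.1 r, fun r => if r ∈ A then q.1 r else q.2 r)

/-- The partial swap `S_A`: the permutation matrix on `ι × ι` induced by `swapFun A`. -/
def partialSwap {Λ : Type*} [Fintype Λ] [DecidableEq Λ] {d : ℕ} (A : Finset Λ) :
    Matrix ((Λ → Fin d) × (Λ → Fin d)) ((Λ → Fin d) × (Λ → Fin d)) ℂ :=
  Matrix.of fun p q => if p = swapFun A q then 1 else 0

section PartialSwap

variable {Λ : Type*} [DecidableEq Λ] {d : ℕ}

theorem swapFun_involutive (A : Finset Λ) : Function.Involutive (swapFun (d := d) A) := by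
  intro q
  ext r <;> by_cases h : r ∈ A <;> simp [swapFun, h]

def swapPerm (A : Finset Λ) : Equiv.Perm ((Λ → Fin d) × (Λ → Fin d)) :=
  (swapFun_involutive A).toPerm

variable [Fintype Λ]

theorem swapFun_compl_eq_swapFun_swap (A : Finset Λ) (q : (Λ → Fin d) × (Λ → Fin d)) :
    swapFun Aᶜ q = swapFun A q.swap := by
  ext r <;> by_cases h : r ∈ A <;> simp [swapFun, h]

theorem swapFun_compl_eq_swap_swapFun (A : Finset Λ) (q : (Λ → Fin d) × (Λ → Fin d)) :
    swapFun Aᶜ q = (swapFun A q).swap := by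
  ext r <;> by_cases h : r ∈ A <;> simp [swapFun, h]

theorem swapPerm_compl_eq_mul_prodComm (A : Finset Λ) :
    swapPerm (d := d) Aᶜ = swapPerm A * Equiv.prodComm _ _ :=
  Equiv.ext (swapFun_compl_eq_swapFun_swap A)

theorem swapPerm_compl_eq_prodComm_mul (A : Finset Λ) :
    swapPerm (d := d) Aᶜ = Equiv.prodComm _ _ * swapPerm A :=
  Equiv.ext (swapFun_compl_eq_swap_swapFun A)

theorem partialSwap_eq_permMatrix (A : Finset Λ) :
    partialSwap (d := d) A = (swapPerm A).permMatrix ℂ := by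
  ext p q
  simp only [partialSwap, swapPerm, Matrix.of_apply, PEquiv.toMatrix_apply, Equiv.toPEquiv_apply,
    Option.mem_def, Option.some.injEq, Function.Involutive.coe_toPerm]
  exact if_congr (swapFun_involutive A).eq_iff.symm rfl rfl

end PartialSwap

theorem Matrix.permMatrix_prodComm_mul_mul_permMatrix_prodComm {ι R : Type*} [Fintype ι]
    [DecidableEq ι] [Semiring R] (Y : Matrix (ι × ι) (ι × ι) R) :
    Equiv.Perm.permMatrix R (Equiv.prodComm ι ι) * Y *
        Equiv.Perm.permMatrix R (Equiv.prodComm ι ι) = Y.submatrix Prod.swap Prod.swap := by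
  rw [PEquiv.toMatrix_toPEquiv_mul, PEquiv.mul_toMatrix_toPEquiv]
  rfl

theorem Matrix.kronecker_submatrix_swap {m n R : Type*} [CommMagma R] (M : Matrix m m R)
    (N : Matrix n n R) : (M ⊗ₖ N).submatrix Prod.swap Prod.swap = N ⊗ₖ M := by
  ext p q
  exact mul_comm _ _

theorem mul_partialSwap_compl_mul_mul_partialSwap_compl {Λ : Type*} [Fintype Λ] [DecidableEq Λ]
    {d : ℕ} (X Y : Matrix ((Λ → Fin d) × (Λ → Fin d)) ((Λ → Fin d) × (Λ → Fin d)) ℂ)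
    (hY : Y.submatrix Prod.swap Prod.swap = Y) (A B : Finset Λ) :
    X * partialSwap Aᶜ * Y * partialSwap Bᶜ = X * partialSwap A * Y * partialSwap B := by
  set P := Equiv.Perm.permMatrix ℂ (Equiv.prodComm (Λ → Fin d) (Λ → Fin d))
  have hA : partialSwap (d := d) Aᶜ = partialSwap A * P := by
    rw [partialSwap_eq_permMatrix, swapPerm_compl_eq_prodComm_mul, Matrix.permMatrix_mul,
      partialSwap_eq_permMatrix]
  have hB : partialSwap (d := d) Bᶜ = P * partialSwap B := by
    rw [partialSwap_eq_permMatrix, swapPerm_compl_eq_mul_prodComm, Matrix.permMatrix_mul,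
      partialSwap_eq_permMatrix]
  calc X * partialSwap Aᶜ * Y * partialSwap Bᶜ
      = X * partialSwap A * (P * Y * P) * partialSwap B := by
        simp only [hA, hB, Matrix.mul_assoc]
    _ = X * partialSwap A * Y * partialSwap B := by
        rw [Matrix.permMatrix_prodComm_mul_mul_permMatrix_prodComm, hY]

theorem trace_partialSwap_compl_general {Λ : Type*} [Fintype Λ] [DecidableEq Λ]
    {d : ℕ} (U : Matrix (Λ → Fin d) (Λ → Fin d) ℂ) (A B : Finset Λ) :
    ((Uᴴ ⊗ₖ Uᴴ) * partialSwap A * (U ⊗ₖ U) * partialSwap B).trace =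
      ((Uᴴ ⊗ₖ Uᴴ) * partialSwap Aᶜ * (U ⊗ₖ U) * partialSwap Bᶜ).trace := by
  rw [mul_partialSwap_compl_mul_mul_partialSwap_compl _ _ (Matrix.kronecker_submatrix_swap U U)]

/-- `Tr((Uᴴ⊗Uᴴ)·S_A·(U⊗U)·S_B) = Tr((Uᴴ⊗Uᴴ)·S_{Λ∖A}·(U⊗U)·S_{Λ∖B})`. -/
theorem trace_partialSwap_compl {Λ : Type*} [Fintype Λ] [DecidableEq Λ]
    {d : ℕ} (hd : 1 ≤ d) (U : Matrix (Λ → Fin d) (Λ → Fin d) ℂ) (A B : Finset Λ) :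
    ((Uᴴ ⊗ₖ Uᴴ) * partialSwap A * (U ⊗ₖ U) * partialSwap B).trace =
      ((Uᴴ ⊗ₖ Uᴴ) * partialSwap Aᶜ * (U ⊗ₖ U) * partialSwap Bᶜ).trace :=
  trace_partialSwap_compl_general U A B
end

section
/- Let Λ be a finite set with |Λ| = N, let d ≥ 1, and ι := (Λ → Fin d). For S ⊆ Λ, let 𝒜_S be the subspace of matrices in Matrix ι ι ℂ supported on S. Equip matrices with the normalized trace tr(M) := Tr(M)/d^N and the inner product ⟨X,Y⟩ := tr(Xᴴ Y), and define η(𝒮,𝒯) := sqrt(Σ_{a,b} |tr(O_aᴴ O_b)|²), computed with orthonormal bases {O_a} of 𝒮 and {O_b} of 𝒯 (this is independent of the choice of bases). Then for every unitary U ∈ Matrix ι ι ℂ and all A, B ⊆ Λ: η(Uᴴ 𝒜_A U, 𝒜_B) = d^{|A| + |B| − N} · η(Uᴴ 𝒜_{Λ∖A} U, 𝒜_{Λ∖B}), where Uᴴ 𝒮 U := {Uᴴ M U : M ∈ 𝒮}. -/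
open Matrix

variable {Λ : Type*} [Fintype Λ] [DecidableEq Λ] {d : ℕ}

/-- A matrix on the many-body space `ι = Λ → Fin d` is supported on `S ⊆ Λ` if its entries
vanish whenever the two configurations differ at a site outside `S`, and otherwise depend
only on the restrictions of the configurations to `S`. -/
def SupportedOn (S : Finset Λ) (M : Matrix (Λ → Fin d) (Λ → Fin d) ℂ) : Prop :=
  (∀ x y, (∃ r ∉ S, x r ≠ y r) → M x y = 0) ∧
  (∀ x y x' y', (∀ r ∈ S, x r = x' r) → (∀ r ∈ S, y r = y' r) →
    (∀ r ∉ S, x r = y r) → (∀ r ∉ S, x' r = y' r) → M x y = M x' y')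

/-- The subspace `𝒜_S` of matrices supported on `S`. -/
noncomputable def suppSubmodule (Λ : Type*) [Fintype Λ] [DecidableEq Λ] (d : ℕ) (S : Finset Λ) :
    Submodule ℂ (Matrix (Λ → Fin d) (Λ → Fin d) ℂ) where
  carrier := {M | SupportedOn S M}
  zero_mem' := ⟨fun _ _ _ => rfl, fun _ _ _ _ _ _ _ _ => rfl⟩
  add_mem' := fun {a b} ha hb =>
    ⟨fun x y h => by simp [Matrix.add_apply, ha.1 x y h, hb.1 x y h],
     fun x y x' y' h1 h2 h3 h4 => by
      simp [Matrix.add_apply, ha.2 x y x' y' h1 h2 h3 h4, hb.2 x y x' y' h1 h2 h3 h4]⟩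
  smul_mem' := fun c M hM =>
    ⟨fun x y h => by simp [Matrix.smul_apply, hM.1 x y h],
     fun x y x' y' h1 h2 h3 h4 => by simp [Matrix.smul_apply, hM.2 x y x' y' h1 h2 h3 h4]⟩

/-- Conjugation `M ↦ Uᴴ M U` as a linear map on matrices. -/
noncomputable def conjLM {ι : Type*} [Fintype ι] [DecidableEq ι] (U : Matrix ι ι ℂ) :
    Matrix ι ι ℂ →ₗ[ℂ] Matrix ι ι ℂ where
  toFun M := Uᴴ * M * U
  map_add' M N := by simp [Matrix.mul_add, Matrix.add_mul]
  map_smul' c M := by simp [Matrix.mul_smul, Matrix.smul_mul]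

/-- The normalized trace `tr(M) = Tr(M)/d^N` on the many-body space, with `tr(𝟙) = 1`. -/
noncomputable def ntr (M : Matrix (Λ → Fin d) (Λ → Fin d) ℂ) : ℂ :=
  M.trace / (d : ℂ) ^ (Fintype.card Λ)

/-- An orthonormal basis of a subspace of matrices with respect to `⟨X,Y⟩ = tr(Xᴴ Y)`. -/
def IsONBasisOf {ι : Type*} [Fintype ι] [DecidableEq ι]
    (O : ι → Matrix (Λ → Fin d) (Λ → Fin d) ℂ)
    (S : Submodule ℂ (Matrix (Λ → Fin d) (Λ → Fin d) ℂ)) : Prop :=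
  (∀ a, O a ∈ S) ∧ (∀ a a', ntr ((O a)ᴴ * O a') = if a = a' then 1 else 0) ∧
    Submodule.span ℂ (Set.range O) = S

/-!
The overlap `η(𝒮, 𝒯)² = ∑ |tr(O_aᴴ P_b)|²` does not depend on the orthonormal bases, because
`∑_b |⟪X, P_b⟫|² = ⟪X, π X⟫` for the orthogonal projection `π` onto the span. For `𝒜_S` we use the
rescaled matrix units `|σ⟩⟨τ|_S ⊗ 𝟙_{Λ∖S}`. Expanding `∑ |Tr((Uᴴ E U)ᴴ F)|²` in coordinates,
the families `E` and `F` enter only through their Gram kernels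
`K(c, b, c', b') = ∑ conj (E c b) · E c' b'`, and the kernel of the matrix units on `Λ∖S` is that
of the matrix units on `S` with its two middle arguments exchanged. Relabelling the eight
summation indices then identifies the unnormalized sums for `(A, B)` and `(Λ∖A, Λ∖B)`, so the
factor `d^{|A|+|B|−N}` comes only from the normalization of the two bases.
-/

lemma Finset.restrict_eq_restrict_iff {α : Type*} {π : α → Type*} (s : Finset α)
    {f g : ∀ a, π a} : s.restrict f = s.restrict g ↔ ∀ a ∈ s, f a = g a := by
  simp [funext_iff]

lemma Finset.restrict_compl_eq_restrict_compl_iff {α : Type*} [DecidableEq α] [Fintype α]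
    {π : α → Type*} (s : Finset α) {f g : ∀ a, π a} :
    sᶜ.restrict f = sᶜ.restrict g ↔ ∀ a ∉ s, f a = g a := by
  simp [funext_iff]

def Finset.restrictProdRestrictComplEquiv {α : Type*} [DecidableEq α] [Fintype α] {β : Type*}
    (s : Finset α) : (α → β) ≃ (s → β) × (↥sᶜ → β) where
  toFun f := (s.restrict f, sᶜ.restrict f)
  invFun x a := if h : a ∈ s then x.1 ⟨a, h⟩ else x.2 ⟨a, Finset.mem_compl.2 h⟩
  left_inv f := by
    funext a
    by_cases h : a ∈ s <;> simp [h]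
  right_inv x := by
    ext ⟨a, h⟩
    · simp [h]
    · simp [Finset.mem_compl.1 h]

@[simp]
lemma Finset.restrict_restrictProdRestrictComplEquiv_symm {α : Type*} [DecidableEq α] [Fintype α]
    {β : Type*} (s : Finset α) (x : (s → β) × (↥sᶜ → β)) :
    s.restrict (s.restrictProdRestrictComplEquiv.symm x) = x.1 :=
  congrArg Prod.fst (s.restrictProdRestrictComplEquiv.apply_symm_apply x)

@[simp]
lemma Finset.restrict_compl_restrictProdRestrictComplEquiv_symm {α : Type*} [DecidableEq α]
    [Fintype α] {β : Type*} (s : Finset α) (x : (s → β) × (↥sᶜ → β)) :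
    sᶜ.restrict (s.restrictProdRestrictComplEquiv.symm x) = x.2 :=
  congrArg Prod.snd (s.restrictProdRestrictComplEquiv.apply_symm_apply x)

section CrossSum

variable {ι V W : Type*} [Fintype ι] [Fintype V] [Fintype W]

def gramKernel (E : V → Matrix ι ι ℂ) (c b c' b' : ι) : ℂ :=
  ∑ v, star (E v c b) * E v c' b'

-- The summand of `∑ |Tr((Uᴴ E U)ᴴ F)|²` once `E` and `F` are traded for their Gram kernels.
def crossTerm (U : Matrix ι ι ℂ) (K L : ι → ι → ι → ι → ℂ) :
    ι × ι × ι × ι → ι × ι × ι × ι → ℂ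
  | (i, j, k, l), (i', j', k', l') =>
    star (U j i) * U k l * U j' i' * star (U k' l') * K k j k' j' * star (L l i l' i')

def crossSum (U : Matrix ι ι ℂ) (K L : ι → ι → ι → ι → ℂ) : ℂ :=
  ∑ x, ∑ y, crossTerm U K L x y

def crossSwap (ι : Type*) :
    (ι × ι × ι × ι) × (ι × ι × ι × ι) ≃ (ι × ι × ι × ι) × (ι × ι × ι × ι) :=
  Function.Involutive.toPerm
    (fun ⟨(i, j, k, l), (i', j', k', l')⟩ => ((l', k', k, l), (i', j', j, i)))
    fun ⟨(_, _, _, _), (_, _, _, _)⟩ => rfl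

lemma crossSum_swap (U : Matrix ι ι ℂ) (K L : ι → ι → ι → ι → ℂ) :
    crossSum U (fun c b c' b' => K c c' b b') (fun c b c' b' => L c c' b b') =
      crossSum U K L := by
  rw [crossSum, crossSum, ← Fintype.sum_prod_type', ← Fintype.sum_prod_type']
  refine Fintype.sum_equiv (crossSwap ι) _ _ fun ⟨(i, j, k, l), (i', j', k', l')⟩ => ?_
  show crossTerm _ _ _ (i, j, k, l) (i', j', k', l') =
    crossTerm U K L (l', k', k, l) (i', j', j, i)
  simp only [crossTerm]
  ring

lemma trace_conj_conjTranspose_mul (U E F : Matrix ι ι ℂ) :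
    ((Uᴴ * E * U)ᴴ * F).trace =
      ∑ i, ∑ j, ∑ k, ∑ l, star (U j i) * star (E k j) * U k l * F l i := by
  simp only [conjTranspose_mul, conjTranspose_conjTranspose, trace, diag, mul_apply,
    conjTranspose_apply, Finset.sum_mul, Finset.mul_sum, mul_assoc]
  refine Finset.sum_congr rfl fun i _ => ?_
  rw [Finset.sum_comm]
  exact Finset.sum_congr rfl fun j _ => Finset.sum_comm

lemma ofReal_sum_norm_sq_trace_eq_crossSum (U : Matrix ι ι ℂ) (E : V → Matrix ι ι ℂ)
    (F : W → Matrix ι ι ℂ) :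
    ((∑ v, ∑ w, ‖((Uᴴ * E v * U)ᴴ * F w).trace‖ ^ 2 : ℝ) : ℂ) =
      crossSum U (gramKernel E) (gramKernel F) := by
  set a : V → W → ι × ι × ι × ι → ℂ := fun v w x =>
    star (U x.2.1 x.1) * star (E v x.2.2.1 x.2.1) * U x.2.2.1 x.2.2.2 * F w x.2.2.2 x.1
  have htrace : ∀ v w, ((Uᴴ * E v * U)ᴴ * F w).trace = ∑ x, a v w x := fun v w => by
    simp only [trace_conj_conjTranspose_mul, Fintype.sum_prod_type, a]
  have hterm : ∀ x y, crossTerm U (gramKernel E) (gramKernel F) x y =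
      ∑ v, ∑ w, a v w x * star (a v w y) := by
    rintro ⟨i, j, k, l⟩ ⟨i', j', k', l'⟩
    simp only [crossTerm, gramKernel, star_sum, Finset.mul_sum, Finset.sum_mul]
    rw [Finset.sum_comm]
    refine Finset.sum_congr rfl fun v _ => Finset.sum_congr rfl fun w _ => ?_
    simp only [a, star_mul', star_star]
    ring
  calc ((∑ v, ∑ w, ‖((Uᴴ * E v * U)ᴴ * F w).trace‖ ^ 2 : ℝ) : ℂ)
      = ∑ v, ∑ w, ∑ x, ∑ y, a v w x * star (a v w y) := by
        push_cast
        simp only [← Complex.mul_conj', htrace, ← Complex.star_def, star_sum, Finset.sum_mul_sum]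
    _ = ∑ v, ∑ x, ∑ y, ∑ w, a v w x * star (a v w y) := by
        refine Finset.sum_congr rfl fun v _ => ?_
        rw [Finset.sum_comm]
        exact Finset.sum_congr rfl fun x _ => Finset.sum_comm
    _ = ∑ x, ∑ y, ∑ v, ∑ w, a v w x * star (a v w y) := by
        rw [Finset.sum_comm]
        exact Finset.sum_congr rfl fun x _ => Finset.sum_comm
    _ = crossSum U (gramKernel E) (gramKernel F) := by
        simp only [crossSum, hterm]

end CrossSum

local notation "𝕄" => Matrix (Λ → Fin d) (Λ → Fin d) ℂ

local notation "⟪" X ", " Y "⟫" => ntr (Xᴴ * Y)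

section InnerProduct

variable {κ : Type*} [Fintype κ]

lemma ntr_sum (f : κ → 𝕄) : ntr (∑ b, f b) = ∑ b, ntr (f b) := by
  simp only [ntr, trace_sum, Finset.sum_div]

lemma ntr_smul (c : ℂ) (M : 𝕄) : ntr (c • M) = c * ntr M := by
  simp only [ntr, trace_smul, smul_eq_mul, mul_div_assoc]

lemma star_ntr_conjTranspose_mul (X Y : 𝕄) : star ⟪X, Y⟫ = ⟪Y, X⟫ := by
  rw [ntr, ntr, star_div₀, ← trace_conjTranspose, conjTranspose_mul, conjTranspose_conjTranspose]
  simp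

lemma ntr_conjTranspose_mul_sum_smul (X : 𝕄) (c : κ → ℂ) (Y : κ → 𝕄) :
    ⟪X, ∑ b, c b • Y b⟫ = ∑ b, c b * ⟪X, Y b⟫ := by
  simp only [Matrix.mul_sum, Matrix.mul_smul, ntr_sum, ntr_smul]

lemma ntr_sum_smul_conjTranspose_mul (c : κ → ℂ) (Y : κ → 𝕄) (X : 𝕄) :
    ⟪∑ b, c b • Y b, X⟫ = ∑ b, star (c b) * ⟪Y b, X⟫ := by
  rw [← star_ntr_conjTranspose_mul, ntr_conjTranspose_mul_sum_smul, star_sum]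
  simp only [star_mul', star_ntr_conjTranspose_mul]

noncomputable def orthoProj (P : κ → 𝕄) (X : 𝕄) : 𝕄 :=
  ∑ b, ⟪P b, X⟫ • P b

lemma ntr_orthoProj_conjTranspose_mul (P : κ → 𝕄) (X Y : 𝕄) :
    ⟪orthoProj P X, Y⟫ = ⟪X, orthoProj P Y⟫ := by
  rw [orthoProj, orthoProj, ntr_sum_smul_conjTranspose_mul, ntr_conjTranspose_mul_sum_smul]
  simp only [star_ntr_conjTranspose_mul, mul_comm]

variable [DecidableEq κ] {P : κ → Matrix (Λ → Fin d) (Λ → Fin d) ℂ}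
  {S : Submodule ℂ (Matrix (Λ → Fin d) (Λ → Fin d) ℂ)}

lemma IsONBasisOf.orthoProj_of_mem (hP : IsONBasisOf P S) {X : 𝕄} (hX : X ∈ S) :
    orthoProj P X = X := by
  rw [← hP.2.2, Submodule.mem_span_range_iff_exists_fun] at hX
  obtain ⟨c, rfl⟩ := hX
  simp [orthoProj, ntr_conjTranspose_mul_sum_smul, hP.2.1]

end InnerProduct

section Eta

variable {ι κ κ' : Type*} [Fintype ι] [Fintype κ] [Fintype κ']
  {S : Submodule ℂ (Matrix (Λ → Fin d) (Λ → Fin d) ℂ)}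

lemma IsONBasisOf.orthoProj_eq [DecidableEq κ] [DecidableEq κ'] {P : κ → 𝕄} {P' : κ' → 𝕄}
    (hP : IsONBasisOf P S) (hP' : IsONBasisOf P' S) : orthoProj P = orthoProj P' := by
  funext X
  have hmem : orthoProj P' X ∈ S := S.sum_mem fun b _ => S.smul_mem _ (hP'.1 b)
  calc orthoProj P X = ∑ b, ⟪P b, orthoProj P' X⟫ • P b := by
        refine Finset.sum_congr rfl fun b _ => ?_
        rw [← ntr_orthoProj_conjTranspose_mul, hP'.orthoProj_of_mem (hP.1 b)]
    _ = orthoProj P' X := hP.orthoProj_of_mem hmem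

lemma sum_norm_sq_ntr_eq_orthoProj (P : κ → 𝕄) (X : 𝕄) :
    ((∑ b, ‖⟪X, P b⟫‖ ^ 2 : ℝ) : ℂ) = ⟪X, orthoProj P X⟫ := by
  rw [orthoProj, ntr_conjTranspose_mul_sum_smul]
  push_cast
  refine Finset.sum_congr rfl fun b _ => ?_
  rw [← star_ntr_conjTranspose_mul X, Complex.star_def, Complex.conj_mul']

lemma IsONBasisOf.sum_norm_sq_ntr_eq [DecidableEq κ] [DecidableEq κ'] {P : κ → 𝕄} {P' : κ' → 𝕄}
    (hP : IsONBasisOf P S) (hP' : IsONBasisOf P' S) (X : 𝕄) :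
    ∑ b, ‖⟪X, P b⟫‖ ^ 2 = ∑ b, ‖⟪X, P' b⟫‖ ^ 2 := by
  apply Complex.ofReal_injective
  rw [sum_norm_sq_ntr_eq_orthoProj, sum_norm_sq_ntr_eq_orthoProj, hP.orthoProj_eq hP']

/-- `η(𝒮, 𝒯)²`, computed from bases `O` of `𝒮` and `P` of `𝒯`. -/
noncomputable def etaSq (O : ι → 𝕄) (P : κ → 𝕄) : ℝ :=
  ∑ a, ∑ b, ‖⟪O a, P b⟫‖ ^ 2

lemma etaSq_comm (O : ι → 𝕄) (P : κ → 𝕄) : etaSq O P = etaSq P O := by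
  rw [etaSq, etaSq, Finset.sum_comm]
  simp only [← star_ntr_conjTranspose_mul (P _), norm_star]

lemma etaSq_congr_right [DecidableEq κ] [DecidableEq κ'] (O : ι → 𝕄) {P : κ → 𝕄} {P' : κ' → 𝕄}
    (hP : IsONBasisOf P S) (hP' : IsONBasisOf P' S) : etaSq O P = etaSq O P' :=
  Finset.sum_congr rfl fun a _ => hP.sum_norm_sq_ntr_eq hP' (O a)

end Eta

section Conjugation

variable {U : Matrix (Λ → Fin d) (Λ → Fin d) ℂ}

lemma ntr_conjTranspose_mul_mul (hU : U * Uᴴ = 1) (M : 𝕄) : ntr (Uᴴ * M * U) = ntr M := by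
  rw [ntr, ntr, trace_mul_cycle, hU, Matrix.one_mul]

lemma IsONBasisOf.conj {ι : Type*} [Fintype ι] [DecidableEq ι] {O : ι → 𝕄} {S : Submodule ℂ 𝕄}
    (hU : U * Uᴴ = 1) (hO : IsONBasisOf O S) :
    IsONBasisOf (fun a => Uᴴ * O a * U) (S.map (conjLM U)) := by
  refine ⟨fun a => S.mem_map_of_mem (hO.1 a), fun a a' => ?_, ?_⟩
  · have hcancel : U * (Uᴴ * (O a' * U)) = O a' * U := by
      rw [← Matrix.mul_assoc, hU, Matrix.one_mul]
    simp only [conjTranspose_mul, conjTranspose_conjTranspose, Matrix.mul_assoc, hcancel]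
    rw [← Matrix.mul_assoc (O a)ᴴ, ← Matrix.mul_assoc Uᴴ, ntr_conjTranspose_mul_mul hU, hO.2.1]
  · rw [← hO.2.2, Submodule.map_span, ← Set.range_comp]
    rfl

end Conjugation

section UnitMatrix

variable (S : Finset Λ)

/-- The matrix unit `|σ⟩⟨τ|` on the sites of `S`, tensored with the identity off `S`. -/
noncomputable def unitMatrix (v : (S → Fin d) × (S → Fin d)) : 𝕄 :=
  of fun p q =>
    if S.restrict p = v.1 ∧ S.restrict q = v.2 ∧ Sᶜ.restrict p = Sᶜ.restrict q then 1 else 0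

lemma unitMatrix_mem (v : (S → Fin d) × (S → Fin d)) :
    unitMatrix S v ∈ suppSubmodule Λ d S := by
  refine ⟨fun x y ⟨r, hr, hxy⟩ => ?_, fun x y x' y' hx hy hxy hxy' => ?_⟩
  · rw [unitMatrix, of_apply, if_neg]
    rintro ⟨-, -, h⟩
    exact hxy ((S.restrict_compl_eq_restrict_compl_iff).1 h r hr)
  · simp [unitMatrix, (S.restrict_eq_restrict_iff).2 hx, (S.restrict_eq_restrict_iff).2 hy,
      (S.restrict_compl_eq_restrict_compl_iff).2 hxy,
      (S.restrict_compl_eq_restrict_compl_iff).2 hxy']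

lemma star_unitMatrix_apply (v : (S → Fin d) × (S → Fin d)) (p q : Λ → Fin d) :
    star (unitMatrix S v p q) = unitMatrix S v p q := by
  simp only [unitMatrix, of_apply]
  split_ifs <;> simp

lemma trace_conjTranspose_mul_unitMatrix (v w : (S → Fin d) × (S → Fin d)) :
    ((unitMatrix S v)ᴴ * unitMatrix S w).trace = if v = w then (d : ℂ) ^ Sᶜ.card else 0 := by
  set e := S.restrictProdRestrictComplEquiv (β := Fin d)
  rw [trace, ← e.symm.sum_comp]
  simp only [diag, mul_apply, conjTranspose_apply, star_unitMatrix_apply]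
  simp only [fun f => (e.symm.sum_comp f).symm]
  simp only [unitMatrix, of_apply, e, Finset.restrict_restrictProdRestrictComplEquiv_symm,
    Finset.restrict_compl_restrictProdRestrictComplEquiv_symm, ite_zero_mul_ite_zero, one_mul,
    Fintype.sum_prod_type]
  by_cases h : v = w
  · subst h
    simp [ite_and, Finset.sum_ite_eq', Finset.card_compl]
  · rw [if_neg h]
    refine Fintype.sum_eq_zero _ fun x => Fintype.sum_eq_zero _ fun y =>
      Fintype.sum_eq_zero _ fun x' => Fintype.sum_eq_zero _ fun y' => if_neg ?_
    rintro ⟨⟨rfl, rfl, -⟩, hw₁, hw₂, -⟩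
    exact h (Prod.ext hw₁ hw₂)

lemma eq_sum_smul_unitMatrix {M : 𝕄} (hM : M ∈ suppSubmodule Λ d S) (z : ↥Sᶜ → Fin d) :
    M = ∑ v, M (S.restrictProdRestrictComplEquiv.symm (v.1, z))
      (S.restrictProdRestrictComplEquiv.symm (v.2, z)) • unitMatrix S v := by
  ext p q
  simp only [Matrix.sum_apply, Matrix.smul_apply, smul_eq_mul]
  by_cases hpq : Sᶜ.restrict p = Sᶜ.restrict q
  · have hunit : ∀ v, unitMatrix S v p q = if v = (S.restrict p, S.restrict q) then 1 else 0 := by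
      intro v
      simp only [unitMatrix, of_apply, hpq, and_true, Prod.ext_iff, eq_comm]
    simp only [hunit, mul_ite, mul_one, mul_zero, Finset.sum_ite_eq', Finset.mem_univ, if_true]
    refine hM.2 p q _ _ ?_ ?_ ((S.restrict_compl_eq_restrict_compl_iff).1 hpq)
      ((S.restrict_compl_eq_restrict_compl_iff).1 ?_)
    · exact (S.restrict_eq_restrict_iff).1
        (S.restrict_restrictProdRestrictComplEquiv_symm (S.restrict p, z)).symm
    · exact (S.restrict_eq_restrict_iff).1
        (S.restrict_restrictProdRestrictComplEquiv_symm (S.restrict q, z)).symm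
    · rw [S.restrict_compl_restrictProdRestrictComplEquiv_symm,
        S.restrict_compl_restrictProdRestrictComplEquiv_symm]
  · have hpq' : ∃ r ∉ S, p r ≠ q r := by
      simpa [S.restrict_compl_eq_restrict_compl_iff] using hpq
    rw [hM.1 p q hpq']
    refine (Finset.sum_eq_zero fun v _ => ?_).symm
    rw [unitMatrix, of_apply, if_neg fun h => hpq h.2.2, mul_zero]

lemma span_range_unitMatrix (hd : 1 ≤ d) :
    Submodule.span ℂ (Set.range (unitMatrix S)) = suppSubmodule Λ d S := by
  refine le_antisymm (Submodule.span_le.2 (Set.range_subset_iff.2 (unitMatrix_mem S)))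
    fun M hM => ?_
  rw [eq_sum_smul_unitMatrix S hM fun _ => ⟨0, hd⟩]
  exact Submodule.sum_mem _ fun v _ => Submodule.smul_mem _ _ (Submodule.subset_span ⟨v, rfl⟩)

noncomputable def unitBasis (v : (S → Fin d) × (S → Fin d)) : 𝕄 :=
  (√((d : ℝ) ^ S.card) : ℂ) • unitMatrix S v

lemma isONBasisOf_unitBasis (hd : 1 ≤ d) : IsONBasisOf (unitBasis S) (suppSubmodule Λ d S) := by
  have hd₀ : (d : ℂ) ≠ 0 := Nat.cast_ne_zero.2 (by omega)
  have hsqrt : (√((d : ℝ) ^ S.card) : ℂ) * √((d : ℝ) ^ S.card) = (d : ℂ) ^ S.card := by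
    rw [← Complex.ofReal_mul, Real.mul_self_sqrt (by positivity)]
    push_cast
    rfl
  refine ⟨fun v => Submodule.smul_mem _ _ (unitMatrix_mem S v), fun v w => ?_, ?_⟩
  · rw [unitBasis, unitBasis, conjTranspose_smul, Matrix.smul_mul, Matrix.mul_smul, smul_smul,
      ntr_smul, ntr, trace_conjTranspose_mul_unitMatrix, Complex.star_def, Complex.conj_ofReal,
      hsqrt]
    split_ifs
    · rw [← mul_div_assoc, ← pow_add, Finset.card_add_card_compl, div_self (pow_ne_zero _ hd₀)]
    · simp
  · have hunit : IsUnit (√((d : ℝ) ^ S.card) : ℂ) :=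
      (Complex.ofReal_ne_zero.2 (by positivity)).isUnit
    change Submodule.span ℂ (Set.range fun v => (√((d : ℝ) ^ S.card) : ℂ) • unitMatrix S v) = _
    rw [← Set.smul_set_range, Submodule.span_smul_eq_of_isUnit _ _ hunit,
      span_range_unitMatrix S hd]

end UnitMatrix

section Complement

lemma gramKernel_unitMatrix (S : Finset Λ) (c b c' b' : Λ → Fin d) :
    gramKernel (unitMatrix S) c b c' b' =
      if S.restrict c = S.restrict c' ∧ S.restrict b = S.restrict b' ∧
        Sᶜ.restrict c = Sᶜ.restrict b ∧ Sᶜ.restrict c' = Sᶜ.restrict b' then 1 else 0 := by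
  simp only [gramKernel, star_unitMatrix_apply]
  simp only [unitMatrix, of_apply, ite_zero_mul_ite_zero, one_mul]
  rw [Fintype.sum_eq_single (S.restrict c, S.restrict b)]
  · exact if_congr ⟨fun ⟨⟨_, _, h⟩, h₁, h₂, h'⟩ => ⟨h₁.symm, h₂.symm, h, h'⟩,
      fun ⟨h₁, h₂, h, h'⟩ => ⟨⟨rfl, rfl, h⟩, h₁.symm, h₂.symm, h'⟩⟩ rfl rfl
  · rintro v hv
    rw [if_neg]
    rintro ⟨⟨h₁, h₂, -⟩, -⟩
    exact hv (Prod.ext h₁.symm h₂.symm)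

lemma gramKernel_unitMatrix_compl (S : Finset Λ) :
    gramKernel (unitMatrix (d := d) Sᶜ) =
      fun c b c' b' => gramKernel (unitMatrix S) c c' b b' := by
  funext c b c' b'
  rw [gramKernel_unitMatrix, gramKernel_unitMatrix, compl_compl]
  exact if_congr (by tauto) rfl rfl

lemma sum_norm_sq_trace_unitMatrix_compl (U : 𝕄) (A B : Finset Λ) :
    ∑ v, ∑ w, ‖((Uᴴ * unitMatrix A v * U)ᴴ * unitMatrix B w).trace‖ ^ 2 =
      ∑ v, ∑ w, ‖((Uᴴ * unitMatrix Aᶜ v * U)ᴴ * unitMatrix Bᶜ w).trace‖ ^ 2 := by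
  apply Complex.ofReal_injective
  rw [ofReal_sum_norm_sq_trace_eq_crossSum, ofReal_sum_norm_sq_trace_eq_crossSum,
    gramKernel_unitMatrix_compl, gramKernel_unitMatrix_compl, crossSum_swap]

end Complement

lemma etaSq_conj_unitBasis (hd : 1 ≤ d) (U : 𝕄) (A B : Finset Λ) :
    etaSq (fun v => Uᴴ * unitBasis A v * U) (unitBasis B) =
      (d : ℝ) ^ ((A.card : ℤ) + B.card - 2 * Fintype.card Λ) *
        ∑ v, ∑ w, ‖((Uᴴ * unitMatrix A v * U)ᴴ * unitMatrix B w).trace‖ ^ 2 := by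
  have hd₀ : (d : ℝ) ≠ 0 := Nat.cast_ne_zero.2 (by omega)
  have hscale : (d : ℝ) ^ ((A.card : ℤ) + B.card - 2 * Fintype.card Λ) =
      √((d : ℝ) ^ A.card) ^ 2 * √((d : ℝ) ^ B.card) ^ 2 / ((d : ℝ) ^ Fintype.card Λ) ^ 2 := by
    rw [Real.sq_sqrt (by positivity), Real.sq_sqrt (by positivity), ← pow_mul',
      zpow_sub₀ hd₀, zpow_add₀ hd₀]
    norm_cast
  rw [etaSq, hscale, Finset.mul_sum]
  refine Finset.sum_congr rfl fun v _ => ?_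
  rw [Finset.mul_sum]
  refine Finset.sum_congr rfl fun w _ => ?_
  have hmat : (Uᴴ * unitBasis A v * U)ᴴ * unitBasis B w =
      ((√((d : ℝ) ^ A.card) * √((d : ℝ) ^ B.card) : ℝ) : ℂ) •
        ((Uᴴ * unitMatrix A v * U)ᴴ * unitMatrix B w) := by
    simp only [unitBasis, Matrix.mul_smul, Matrix.smul_mul, conjTranspose_smul, smul_smul,
      Complex.star_def, Complex.conj_ofReal, Complex.ofReal_mul, mul_comm]
  rw [hmat, ntr_smul, ntr, norm_mul, norm_div, Complex.norm_real,
    Real.norm_of_nonneg (by positivity), norm_pow, Complex.norm_natCast]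
  ring

lemma etaSq_eq_of_isONBasisOf (hd : 1 ≤ d) {U : 𝕄} (hU : U * Uᴴ = 1) {A B : Finset Λ}
    {ι κ : Type*} [Fintype ι] [DecidableEq ι] [Fintype κ] [DecidableEq κ] {O : ι → 𝕄} {P : κ → 𝕄}
    (hO : IsONBasisOf O (Submodule.map (conjLM U) (suppSubmodule Λ d A)))
    (hP : IsONBasisOf P (suppSubmodule Λ d B)) :
    etaSq O P = (d : ℝ) ^ ((A.card : ℤ) + B.card - 2 * Fintype.card Λ) *
      ∑ v, ∑ w, ‖((Uᴴ * unitMatrix A v * U)ᴴ * unitMatrix B w).trace‖ ^ 2 := by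
  rw [etaSq_congr_right O hP (isONBasisOf_unitBasis B hd), etaSq_comm,
    etaSq_congr_right _ hO ((isONBasisOf_unitBasis A hd).conj hU), etaSq_comm,
    etaSq_conj_unitBasis hd]

/-- `η(Uᴴ𝒜_A U, 𝒜_B) = d^{|A|+|B|−N} · η(Uᴴ𝒜_{Λ∖A}U, 𝒜_{Λ∖B})`, where `η` is computed from
any orthonormal bases of the respective subspaces. -/
theorem eta_complement (hd : 1 ≤ d)
    (U : Matrix (Λ → Fin d) (Λ → Fin d) ℂ) (hU : Uᴴ * U = 1 ∧ U * Uᴴ = 1)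
    (A B : Finset Λ)
    {ι₁ κ₁ ι₂ κ₂ : Type} [Fintype ι₁] [DecidableEq ι₁] [Fintype κ₁] [DecidableEq κ₁]
    [Fintype ι₂] [DecidableEq ι₂] [Fintype κ₂] [DecidableEq κ₂]
    (O : ι₁ → Matrix (Λ → Fin d) (Λ → Fin d) ℂ)
    (P : κ₁ → Matrix (Λ → Fin d) (Λ → Fin d) ℂ)
    (O' : ι₂ → Matrix (Λ → Fin d) (Λ → Fin d) ℂ)
    (P' : κ₂ → Matrix (Λ → Fin d) (Λ → Fin d) ℂ)
    (hO : IsONBasisOf O (Submodule.map (conjLM U) (suppSubmodule Λ d A)))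
    (hP : IsONBasisOf P (suppSubmodule Λ d B))
    (hO' : IsONBasisOf O' (Submodule.map (conjLM U) (suppSubmodule Λ d Aᶜ)))
    (hP' : IsONBasisOf P' (suppSubmodule Λ d Bᶜ)) :
    Real.sqrt (∑ a : ι₁, ∑ b : κ₁, ‖ntr ((O a)ᴴ * P b)‖ ^ 2) =
      (d : ℝ) ^ ((A.card : ℤ) + (B.card : ℤ) - (Fintype.card Λ : ℤ)) *
        Real.sqrt (∑ a : ι₂, ∑ b : κ₂, ‖ntr ((O' a)ᴴ * P' b)‖ ^ 2) := by
  have hd₀ : (d : ℝ) ≠ 0 := Nat.cast_ne_zero.2 (by omega)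
  have hscale : (d : ℝ) ^ ((A.card : ℤ) + B.card - 2 * Fintype.card Λ) =
      ((d : ℝ) ^ ((A.card : ℤ) + (B.card : ℤ) - (Fintype.card Λ : ℤ))) ^ 2 *
        (d : ℝ) ^ ((Aᶜ.card : ℤ) + Bᶜ.card - 2 * Fintype.card Λ) := by
    rw [← zpow_natCast, ← _root_.zpow_mul, ← zpow_add₀ hd₀, Finset.card_compl, Finset.card_compl,
      Nat.cast_sub A.card_le_univ, Nat.cast_sub B.card_le_univ]
    ring_nf
  change √(etaSq O P) = _ * √(etaSq O' P')
  rw [etaSq_eq_of_isONBasisOf hd hU.2 hO hP, etaSq_eq_of_isONBasisOf hd hU.2 hO' hP',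
    ← sum_norm_sq_trace_unitMatrix_compl, hscale, mul_assoc, Real.sqrt_mul (sq_nonneg _),
    Real.sqrt_sq (by positivity)]
end

section
/- Let H be an n×n complex matrix with Hᴴ = H and H·H = H, and let P_I, P_J, P_K be Hermitian idempotent n×n matrices with P_I·P_J = 0, P_J·P_K = 0, and P_K·P_I = 0. Then ∫₀^{2π} Tr( exp(i t H) · (P_K H P_I − P_I H P_K) · exp(−i t H) · P_J ) dt = 4π · Tr( H P_K H P_I H P_J − H P_I H P_K H P_J ). -/
/-!
Since `H` is a projector, `exp (i s H) = 1 + (exp (i s) - 1) H`, so the conjugated current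
`A = P_K H P_I - P_I H P_K` expands into `A`, `A H`, `H A` and `H A H` with scalar coefficients.
The orthogonality of the projections kills `A P_J` and the trace of `A H P_J`, leaving
`(exp (i t) - 1)(exp (-i t) - 1) = 2 - 2 cos t` times `Tr (H A H P_J)`; the cosine integrates to
zero over a period.
-/

open Matrix

theorem NormedSpace.exp_smul_of_isIdempotentElem {A : Type*} [Ring A] [Algebra ℂ A]
    [TopologicalSpace A] [IsTopologicalRing A] [ContinuousSMul ℂ A] [T2Space A]
    {p : A} (hp : IsIdempotentElem p) (c : ℂ) :
    NormedSpace.exp (c • p) = 1 + (Complex.exp c - 1) • p := by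
  have hterm : ∀ k : ℕ, ((k.factorial : ℂ)⁻¹) • (c • p) ^ k =
      ((k.factorial : ℂ)⁻¹ • c ^ k) • p + if k = 0 then 1 - p else 0 := by
    rintro (_ | k)
    · simp
    · rw [smul_pow, hp.pow_succ_eq, smul_smul, smul_eq_mul, if_neg k.succ_ne_zero, add_zero]
  have hsum : HasSum (fun k : ℕ => ((k.factorial : ℂ)⁻¹) • (c • p) ^ k)
      (Complex.exp c • p + (1 - p)) := by
    simp_rw [hterm, Complex.exp_eq_exp_ℂ]
    exact ((NormedSpace.exp_series_hasSum_exp' c).smul_const p).add (hasSum_ite_eq 0 _)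
  rw [congrFun (NormedSpace.exp_eq_tsum ℂ), hsum.tsum_eq, sub_smul, one_smul]
  abel

namespace Matrix

variable {ι R : Type*} [Fintype ι] [DecidableEq ι] [CommRing R]

theorem trace_one_add_smul_mul_mul_one_add_smul_mul (a b : R) {H X P : Matrix ι ι R}
    (hXP : X * P = 0) (hXHP : (X * H * P).trace = 0) :
    ((1 + a • H) * X * (1 + b • H) * P).trace = a * b * (H * X * H * P).trace := by
  have hexpand : (1 + a • H) * X * (1 + b • H) * P =
      X * P + b • (X * H * P) + a • (H * (X * P)) + (a * b) • (H * X * H * P) := by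
    simp only [add_mul, mul_add, one_mul, mul_one, smul_mul_assoc, mul_smul_comm, smul_add,
      smul_smul, mul_assoc]
    module
  rw [hexpand, hXP]
  simp [hXHP]

variable {H PI PJ PK : Matrix ι ι R}

theorem current_mul_eq_zero (hIJ : PI * PJ = 0) (hKJ : PK * PJ = 0) :
    (PK * H * PI - PI * H * PK) * PJ = 0 := by
  simp [sub_mul, mul_assoc, hIJ, hKJ]

theorem trace_current_mul_mul_eq_zero (hJI : PJ * PI = 0) (hJK : PJ * PK = 0) :
    ((PK * H * PI - PI * H * PK) * H * PJ).trace = 0 := by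
  rw [sub_mul, sub_mul, trace_sub, trace_mul_comm _ PJ, trace_mul_comm _ PJ]
  simp [← mul_assoc, hJI, hJK]

end Matrix

theorem Complex.exp_mul_I_sub_one_mul_exp_neg_mul_I_sub_one (z : ℂ) :
    (Complex.exp (I * z) - 1) * (Complex.exp (-(I * z)) - 1) = 2 - 2 * Complex.cos z := by
  have hprod : Complex.exp (I * z) * Complex.exp (-(I * z)) = 1 := by
    rw [← Complex.exp_add, add_neg_cancel, Complex.exp_zero]
  rw [Complex.two_cos, neg_mul, mul_comm z I]
  linear_combination hprod

theorem integral_two_sub_two_cos_zero_two_pi :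
    ∫ t in (0 : ℝ)..(2 * Real.pi), (2 - 2 * Real.cos t) = 4 * Real.pi := by
  rw [intervalIntegral.integral_sub intervalIntegrable_const
      (intervalIntegral.intervalIntegrable_cos.const_mul 2),
    intervalIntegral.integral_const_mul, integral_cos, intervalIntegral.integral_const]
  simp only [Real.sin_two_pi, Real.sin_zero, smul_eq_mul]
  ring

theorem integrated_current_projector_general {n : ℕ}
    (H PI PJ PK : Matrix (Fin n) (Fin n) ℂ)
    (hH2 : H * H = H)
    (hPI : PIᴴ = PI)
    (hPJ : PJᴴ = PJ)
    (hPK : PKᴴ = PK)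
    (hIJ : PI * PJ = 0) (hJK : PJ * PK = 0) :
    ∫ t in (0 : ℝ)..(2 * Real.pi),
        (NormedSpace.exp ((Complex.I * (t : ℂ)) • H) *
          (PK * H * PI - PI * H * PK) *
          NormedSpace.exp ((-(Complex.I * (t : ℂ))) • H) * PJ).trace =
      ((4 * Real.pi : ℝ) : ℂ) *
        (H * PK * H * PI * H * PJ - H * PI * H * PK * H * PJ).trace := by
  have hKJ : PK * PJ = 0 := ((IsSelfAdjoint.commute_of_mul_eq_zero hPJ hPK hJK).symm.eq).trans hJK
  have hJI : PJ * PI = 0 := ((IsSelfAdjoint.commute_of_mul_eq_zero hPI hPJ hIJ).symm.eq).trans hIJ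
  have hintegrand : ∀ t : ℝ,
      (NormedSpace.exp ((Complex.I * (t : ℂ)) • H) * (PK * H * PI - PI * H * PK) *
          NormedSpace.exp ((-(Complex.I * (t : ℂ))) • H) * PJ).trace =
        ((2 - 2 * Real.cos t : ℝ) : ℂ) *
          (H * PK * H * PI * H * PJ - H * PI * H * PK * H * PJ).trace := by
    intro t
    rw [NormedSpace.exp_smul_of_isIdempotentElem hH2, NormedSpace.exp_smul_of_isIdempotentElem hH2,
      trace_one_add_smul_mul_mul_one_add_smul_mul _ _ (current_mul_eq_zero hIJ hKJ)
        (trace_current_mul_mul_eq_zero hJI hJK),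
      Complex.exp_mul_I_sub_one_mul_exp_neg_mul_I_sub_one]
    push_cast
    congr 2
    noncomm_ring
  simp_rw [hintegrand]
  rw [intervalIntegral.integral_mul_const, intervalIntegral.integral_ofReal,
    integral_two_sub_two_cos_zero_two_pi]

/-- For a projector Hamiltonian `H` and mutually orthogonal projections `P_I, P_J, P_K`,
the time-integrated current `∫₀^{2π} Tr(e^{itH}(P_K H P_I − P_I H P_K)e^{−itH} P_J) dt`
equals `4π·Tr(H P_K H P_I H P_J − H P_I H P_K H P_J)`. -/
theorem integrated_current_projector {n : ℕ}
    (H PI PJ PK : Matrix (Fin n) (Fin n) ℂ)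
    (hH : Hᴴ = H) (hH2 : H * H = H)
    (hPI : PIᴴ = PI) (hPI2 : PI * PI = PI)
    (hPJ : PJᴴ = PJ) (hPJ2 : PJ * PJ = PJ)
    (hPK : PKᴴ = PK) (hPK2 : PK * PK = PK)
    (hIJ : PI * PJ = 0) (hJK : PJ * PK = 0) (hKI : PK * PI = 0) :
    ∫ t in (0 : ℝ)..(2 * Real.pi),
        (NormedSpace.exp ((Complex.I * (t : ℂ)) • H) *
          (PK * H * PI - PI * H * PK) *
          NormedSpace.exp ((-(Complex.I * (t : ℂ))) • H) * PJ).trace =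
      ((4 * Real.pi : ℝ) : ℂ) *
        (H * PK * H * PI * H * PJ - H * PI * H * PK * H * PJ).trace :=
  integrated_current_projector_general H PI PJ PK hH2 hPI hPJ hPK hIJ hJK
end
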